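/- arXiv:math/0311251 — 4 statements merged into one kernel-verified Lean document; each statement's English description precedes it below -/
import Mathlib

section
/- For all λ, μ ∈ ℤ^N the following are equivalent: (i) l(λ) = l(μ) and Z_s(λ) ≡ Z_s(μ) (mod p) for all integers s ≥ 1; (ii) l(λ) = l(μ) and A_r(λ) − B_r(λ) = A_r(μ) − B_r(μ) for all r ∈ ℤ/pℤ. -/
namespace Kujawa

open Finset

variable {n : ℕ}

/-- The sign `(−1)^{p̄ i}` attached to the parity sequence `pb`. -/
def sg (pb : Fin (n + 1) → ZMod 2) (i : Fin (n + 1)) : ℤ :=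
  if pb i = 0 then 1 else -1

/-- `ϑ_j = ∑_{i > j} (−1)^{p̄_i + p̄_j}`. -/
def theta (pb : Fin (n + 1) → ZMod 2) (j : Fin (n + 1)) : ℤ :=
  ∑ i ∈ Finset.Ioi j, sg pb i * sg pb j

/-- The standard basis vector `ε_i` of `X(T) = ℤ^N`. -/
def eps (i : Fin (n + 1)) : Fin (n + 1) → ℤ := fun j => if j = i then 1 else 0

/-- The `j`-th residue `r_j(λ) = (λ + ϑ, ε_j)`. -/
def res (pb : Fin (n + 1) → ZMod 2) (l : Fin (n + 1) → ℤ) (j : Fin (n + 1)) : ℤ :=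
  sg pb j * (l j + theta pb j)

/-- `ρ = ϑ + ∑_{i : p̄_i = 0} ε_i`, coordinatewise. -/
def rho (pb : Fin (n + 1) → ZMod 2) (k : Fin (n + 1)) : ℤ :=
  theta pb k + (if pb k = 0 then 1 else 0)

/-- `l(λ) = ∑ λ_i`. -/
def ell (l : Fin (n + 1) → ℤ) : ℤ := ∑ i, l i

/-- The central character value `Z_r(λ)`. -/
def Zint (pb : Fin (n + 1) → ZMod 2) (r : ℕ) (l : Fin (n + 1) → ℤ) : ℤ :=
  ∑ s ∈ Finset.Icc 1 r, (-1 : ℤ) ^ (s - 1) *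
    ∑ K ∈ Finset.powersetCard s (Finset.univ : Finset (Fin (n + 1))),
      ∑ a ∈ Fintype.piFinset (fun _ : Fin (n + 1) => Finset.range (r + 2)),
        if (∑ k ∈ K, a k) = r - s + 1 ∧ (∀ k, k ∉ K → a k = 0) then
          (∏ k ∈ K, sg pb k) * ∏ k ∈ K, res pb l k ^ a k
        else 0

/-- `A_r(λ) = #{i : r_i(λ+ε_i) ≡ r (mod p)}`. -/
def Acount (pb : Fin (n + 1) → ZMod 2) (p : ℕ) (r : ZMod p) (l : Fin (n + 1) → ℤ) : ℕ :=
  (Finset.univ.filter fun i : Fin (n + 1) => ((res pb (l + eps i) i : ℤ) : ZMod p) = r).card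

/-- `B_r(λ) = #{i : r_i(λ) ≡ r (mod p)}`. -/
def Bcount (pb : Fin (n + 1) → ZMod 2) (p : ℕ) (r : ZMod p) (l : Fin (n + 1) → ℤ) : ℕ :=
  (Finset.univ.filter fun i : Fin (n + 1) => ((res pb l i : ℤ) : ZMod p) = r).card

/-- For `p = 0`: `γ_a` is the basis element `single a 1` of the free module `ℤ →₀ ℤ`. -/
noncomputable def gamma0 (a : ℤ) : ℤ →₀ ℤ := Finsupp.single a 1

/-- `wt` for `p = 0`, with values in the free `ℤ`-module on basis `{γ_a : a ∈ ℤ}`. -/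
noncomputable def wt0 (pb : Fin (n + 1) → ZMod 2) (l : Fin (n + 1) → ℤ) : ℤ →₀ ℤ :=
  ∑ i : Fin (n + 1), sg pb i • gamma0 (sg pb i * (l i + rho pb i))

/-- `Λ_r ∈ P = ℤδ ⊕ ⊕_{r ∈ ℤ/pℤ} ℤΛ_r`. -/
def LamP (p : ℕ) (r : ZMod p) : ℤ × (ZMod p → ℤ) := (0, fun s => if s = r then 1 else 0)

/-- `δ ∈ P`. -/
def delP (p : ℕ) : ℤ × (ZMod p → ℤ) := (1, 0)

/-- `γ_a = Λ_{s mod p} − Λ_{(s−1) mod p} − d·δ`, where `a = p·d + s` with `1 ≤ s ≤ p`. -/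
def gammaP (p : ℕ) (a : ℤ) : ℤ × (ZMod p → ℤ) :=
  LamP p (((a - 1) % (p : ℤ) + 1 : ℤ) : ZMod p) - LamP p (((a - 1) % (p : ℤ) : ℤ) : ZMod p) -
    ((a - 1) / (p : ℤ)) • delP p

/-- `wt` for prime `p`. -/
def wtP (p : ℕ) (pb : Fin (n + 1) → ZMod 2) (l : Fin (n + 1) → ℤ) : ℤ × (ZMod p → ℤ) :=
  ∑ i : Fin (n + 1), sg pb i • gammaP p (sg pb i * (l i + rho pb i))

/-- Entry `i` of the `r`-signature of `λ`: `1` codes `+`, `-1` codes `−`, `0` codes `0`. -/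
def sig (pb : Fin (n + 1) → ZMod 2) (p : ℕ) (r : ZMod p) (l : Fin (n + 1) → ℤ)
    (i : Fin (n + 1)) : ℤ :=
  if ((res pb (l + eps i) i : ℤ) : ZMod p) = r then 1
  else if ((res pb l i : ℤ) : ZMod p) = r then -1
  else 0

/-- Number of `−`'s of the `r`-signature of `λ` in positions `[i..j]`. -/
noncomputable def nM (pb : Fin (n + 1) → ZMod 2) (p : ℕ) (r : ZMod p) (l : Fin (n + 1) → ℤ)
    (i j : Fin (n + 1)) : ℕ :=
  Set.ncard {k : Fin (n + 1) | k ∈ Finset.Icc i j ∧ sig pb p r l k = -1}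

/-- Number of `+`'s of the `r`-signature of `λ` in positions `[i..j]`. -/
noncomputable def nP (pb : Fin (n + 1) → ZMod 2) (p : ℕ) (r : ZMod p) (l : Fin (n + 1) → ℤ)
    (i j : Fin (n + 1)) : ℕ :=
  Set.ncard {k : Fin (n + 1) | k ∈ Finset.Icc i j ∧ sig pb p r l k = 1}

/-- `i` is the position of a `−` in the reduced `r`-signature of `λ` (i.e. `i` is
`r`-normal for `λ`): the `−` at `i` is never cancelled, which happens exactly when every
interval `[i..j]` contains strictly more `−`'s than `+`'s. -/
def RMinus (pb : Fin (n + 1) → ZMod 2) (p : ℕ) (r : ZMod p) (l : Fin (n + 1) → ℤ)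
    (i : Fin (n + 1)) : Prop :=
  sig pb p r l i = -1 ∧ ∀ j : Fin (n + 1), i ≤ j → nP pb p r l i j < nM pb p r l i j

/-- `i` is the position of a `+` in the reduced `r`-signature of `λ` (i.e. `i` is
`r`-conormal for `λ`). -/
def RPlus (pb : Fin (n + 1) → ZMod 2) (p : ℕ) (r : ZMod p) (l : Fin (n + 1) → ℤ)
    (i : Fin (n + 1)) : Prop :=
  sig pb p r l i = 1 ∧ ∀ j : Fin (n + 1), j ≤ i → nM pb p r l j i < nP pb p r l j i

/-- `i` is the position of the leftmost `−` in the reduced `r`-signature (`r`-good). -/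
def RGood (pb : Fin (n + 1) → ZMod 2) (p : ℕ) (r : ZMod p) (l : Fin (n + 1) → ℤ)
    (i : Fin (n + 1)) : Prop :=
  RMinus pb p r l i ∧ ∀ j : Fin (n + 1), j < i → ¬ RMinus pb p r l j

/-- `i` is the position of the rightmost `+` in the reduced `r`-signature (`r`-cogood). -/
def RCogood (pb : Fin (n + 1) → ZMod 2) (p : ℕ) (r : ZMod p) (l : Fin (n + 1) → ℤ)
    (i : Fin (n + 1)) : Prop :=
  RPlus pb p r l i ∧ ∀ j : Fin (n + 1), i < j → ¬ RPlus pb p r l j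

open Classical in
/-- The crystal operator `ẽ*_r`, with `none` playing the role of `0`. -/
noncomputable def eStar (pb : Fin (n + 1) → ZMod 2) (p : ℕ) (r : ZMod p)
    (l : Fin (n + 1) → ℤ) : Option (Fin (n + 1) → ℤ) :=
  if h : (Finset.univ.filter (RMinus pb p r l)).Nonempty then
    some (l - eps ((Finset.univ.filter (RMinus pb p r l)).min' h))
  else none

open Classical in
/-- The crystal operator `f̃*_r`, with `none` playing the role of `0`. -/
noncomputable def fStar (pb : Fin (n + 1) → ZMod 2) (p : ℕ) (r : ZMod p)
    (l : Fin (n + 1) → ℤ) : Option (Fin (n + 1) → ℤ) :=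
  if h : (Finset.univ.filter (RPlus pb p r l)).Nonempty then
    some (l + eps ((Finset.univ.filter (RPlus pb p r l)).max' h))
  else none

/-- `A ↓ B`: there is an injection `θ : A → B` with `θ a ≤ a` for all `a ∈ A`. -/
def Down (A B : Finset (Fin (n + 1))) : Prop :=
  ∃ θ : Fin (n + 1) → Fin (n + 1), Set.InjOn θ ↑A ∧ ∀ a ∈ A, θ a ∈ B ∧ θ a ≤ a

/-- `C_{i,j}(λ) = {h ∈ (i..j) : c_{i,h}(λ) ≡ 0 (mod p)}`. -/
def Cset (pb : Fin (n + 1) → ZMod 2) (p : ℕ) (l : Fin (n + 1) → ℤ) (i j : Fin (n + 1)) :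
    Finset (Fin (n + 1)) :=
  (Finset.Ioo i j).filter fun h => ((res pb l i - res pb l h : ℤ) : ZMod p) = 0

/-- `B_{i,j}(λ) = {h ∈ [i..j) : b_{i,h}(λ) ≡ 0 (mod p)}`. -/
def Bset (pb : Fin (n + 1) → ZMod 2) (p : ℕ) (l : Fin (n + 1) → ℤ) (i j : Fin (n + 1)) :
    Finset (Fin (n + 1)) :=
  (Finset.Ico i j).filter fun h =>
    ((res pb l i - res pb (l + eps (h + 1)) (h + 1) : ℤ) : ZMod p) = 0

/-- The opposite parity sequence `p̄′_k = p̄_{w₀ k} + 1̄`, where `w₀ k = N + 1 − k`. -/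
def pbRev (pb : Fin (n + 1) → ZMod 2) : Fin (n + 1) → ZMod 2 := fun k => pb k.rev + 1

/-- `s̃ : ℤ^N → ℤ^N`, `(s̃ λ)_{w₀ i} = −λ_i`. -/
def stilde (l : Fin (n + 1) → ℤ) : Fin (n + 1) → ℤ := fun k => -l k.rev

/-- `(i, j)` is an `r`-canceling pair for `λ` (for `i < j`). -/
def CPair (pb : Fin (n + 1) → ZMod 2) (p : ℕ) (r : ZMod p) (l : Fin (n + 1) → ℤ)
    (i j : Fin (n + 1)) : Prop :=
  sig pb p r l i = -1 ∧ sig pb p r l j = 1 ∧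
    ∀ k : Fin (n + 1), i < k → k < j → sig pb p r l k = 0

/-- `(i i+1)·λ`: interchange coordinates `i` and `i+1`. -/
def swapL (i : Fin (n + 1)) (l : Fin (n + 1) → ℤ) : Fin (n + 1) → ℤ :=
  fun k => if k = i then l (i + 1) else if k = i + 1 then l i else l k

/-- The parity sequence obtained from `pb` by interchanging entries `i` and `i+1`. -/
def pbSwap (pb : Fin (n + 1) → ZMod 2) (i : Fin (n + 1)) : Fin (n + 1) → ZMod 2 :=
  fun k => if k = i then pb (i + 1) else if k = i + 1 then pb i else pb k

/-- The odd reflection `s_i` on `X(T)`. -/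
def sI (pb : Fin (n + 1) → ZMod 2) (p : ℕ) (i : Fin (n + 1)) (l : Fin (n + 1) → ℤ) :
    Fin (n + 1) → ℤ :=
  if ((sg pb i * l i - sg pb (i + 1) * l (i + 1) : ℤ) : ZMod p) = 0 then swapL i l
  else swapL i l + eps i - eps (i + 1)

/-!
With `w_i = (−1)^{p̄_i}` and `b_i = r_i(λ)` one has `r_i(λ + ε_i) = b_i + w_i`, so the series
`H_λ(t) = ∏_i (1 − w_i t / (1 − b_i t))` equals `∏_i (1 − r_i(λ + ε_i) t) / (1 − r_i(λ) t)`.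
Its `t^{r+1}`-coefficient is `−Z_r(λ) + (−1)^{r+1} e_{r+1}(w)`, whose second summand does not
depend on `λ`. Hence, over `ℤ/pℤ`, the `Z_r` agree for all `r ≥ 1` iff `H_λ = H_μ`, that is iff
`∏_i (1 − r_i(λ + ε_i) t)(1 − r_i(μ) t) = ∏_i (1 − r_i(μ + ε_i) t)(1 − r_i(λ) t)`.
As `ℤ/pℤ` is a domain, `∏_{c ∈ M} (1 − c t)` determines the multiset `M` once its size is known
(reverse the polynomial and take roots), and equality of the two multisets of residues says
exactly that `A_r − B_r` agree for every `r`.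
-/

lemma count_map_univ_val {α β : Type*} [Fintype α] [DecidableEq β] (f : α → β) (b : β) :
    (univ.val.map f).count b = #{a | f a = b} := by
  rw [Multiset.count_map, Finset.card_def, Finset.filter_val]
  exact congrArg Multiset.card (Multiset.filter_congr fun _ _ => eq_comm)

section Polynomial
open Polynomial
variable {R : Type*} [CommRing R]

lemma reflect_prod_map_one_sub_C_mul_X (M : Multiset R) :
    ((M.map fun c => 1 - C c * X).prod).natDegree ≤ Multiset.card M ∧
      reflect (Multiset.card M) (M.map fun c => 1 - C c * X).prod =
        (M.map fun c => X - C c).prod := by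
  induction M using Multiset.induction with
  | empty => simp
  | cons c M ih =>
    have hc : (1 - C c * X).natDegree ≤ 1 :=
      (natDegree_sub_le _ _).trans
        (max_le (by simp) ((natDegree_C_mul_le _ _).trans natDegree_X_le))
    have hrefl : reflect 1 (1 - C c * X) = X - C c := by simp [reflect_sub]
    simp only [Multiset.map_cons, Multiset.prod_cons, Multiset.card_cons]
    refine ⟨natDegree_mul_le.trans (by omega), ?_⟩
    rw [add_comm, reflect_mul _ _ hc ih.1, hrefl, ih.2]

lemma eq_of_prod_map_one_sub_C_mul_X_eq [IsDomain R] {M N : Multiset R}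
    (hcard : Multiset.card M = Multiset.card N)
    (h : (M.map fun c => 1 - C c * X).prod = (N.map fun c => 1 - C c * X).prod) : M = N := by
  have hXsub : (M.map fun c => X - C c).prod = (N.map fun c => X - C c).prod := by
    rw [← (reflect_prod_map_one_sub_C_mul_X M).2, ← (reflect_prod_map_one_sub_C_mul_X N).2,
      hcard, h]
  simpa only [roots_multiset_prod_X_sub_C] using congrArg roots hXsub

end Polynomial

section PowerSeries
open PowerSeries
variable {R : Type*} [CommRing R] {ι : Type*} [Fintype ι]

noncomputable def geomSeries (b : R) : R⟦X⟧ := rescale b (mk 1)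

lemma coeff_geomSeries (b : R) (m : ℕ) : coeff m (geomSeries b) = b ^ m := by
  simp [geomSeries, coeff_rescale]

lemma constantCoeff_geomSeries (b : R) : constantCoeff (geomSeries b) = 1 := by
  rw [← coeff_zero_eq_constantCoeff_apply, coeff_geomSeries, pow_zero]

lemma one_sub_C_mul_X_mul_geomSeries (b : R) : (1 - C b * X) * geomSeries b = 1 := by
  have h := congrArg (rescale b) (mk_one_mul_one_sub_eq_one (S := R))
  rwa [map_mul, map_sub, map_one, rescale_X, mul_comm] at h

lemma coeff_prod_geomSeries [DecidableEq ι] (b : ι → R) (t : Finset ι) {m M : ℕ}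
    (hm : m < M) :
    coeff m (∏ i ∈ t, geomSeries (b i)) =
      ∑ a ∈ Fintype.piFinset (fun _ : ι => range M),
        if (∑ k ∈ t, a k) = m ∧ (∀ k, k ∉ t → a k = 0) then ∏ k ∈ t, b k ^ a k
        else 0 := by
  rw [coeff_prod, ← sum_filter]
  refine sum_nbij' (fun l => ⇑l) (fun a => Finsupp.equivFunOnFinite.symm a) ?_ ?_ ?_ ?_ ?_
  · intro l hl
    rw [mem_finsuppAntidiag] at hl
    have hout : ∀ k, k ∉ t → l k = 0 := fun k hk =>
      Finsupp.notMem_support_iff.mp fun h => hk (hl.2 h)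
    simp only [mem_filter, Fintype.mem_piFinset, mem_range]
    refine ⟨fun i => ?_, hl.1, hout⟩
    by_cases hi : i ∈ t
    · exact lt_of_le_of_lt ((single_le_sum (fun k _ => Nat.zero_le (l k)) hi).trans hl.1.le) hm
    · rw [hout i hi]; omega
  · intro a ha
    simp only [mem_filter, Fintype.mem_piFinset, mem_range] at ha
    refine mem_finsuppAntidiag.mpr ⟨by simpa using ha.2.1, fun k hk => ?_⟩
    by_contra hkt
    exact (Finsupp.mem_support_iff.mp hk) (ha.2.2 k hkt)
  · intro l _; exact Finsupp.equivFunOnFinite_symm_coe l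
  · intro a _; rfl
  · intro l _
    simp [coeff_geomSeries]

noncomputable def zSeries (w b : ι → R) : R⟦X⟧ := ∏ i, (1 - C (w i) * X * geomSeries (b i))

lemma zSeries_eq_sum (w b : ι → R) {N : ℕ} (hN : Fintype.card ι < N) :
    zSeries w b = ∑ s ∈ range N, ∑ K ∈ powersetCard s univ,
      C ((-1) ^ s * ∏ k ∈ K, w k) * (X ^ s * ∏ k ∈ K, geomSeries (b k)) := by
  have h : ∀ i, 1 - C (w i) * X * geomSeries (b i) = 1 + -(C (w i) * X * geomSeries (b i)) :=
    fun i => sub_eq_add_neg _ _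
  rw [zSeries, prod_congr rfl fun i _ => h i, prod_one_add, sum_powerset, card_univ]
  refine sum_subset_zero_on_sdiff (range_subset_range.mpr hN) (fun s hs => ?_) fun s _ => ?_
  · rw [mem_sdiff, mem_range, mem_range] at hs
    rw [powersetCard_eq_empty.mpr (by rw [card_univ]; omega), sum_empty]
  · refine sum_congr rfl fun K hK => ?_
    rw [← (mem_powersetCard.mp hK).2, prod_neg, prod_mul_distrib, prod_mul_distrib, prod_const,
      ← map_prod, map_mul, map_pow, map_neg, map_one]
    ring

noncomputable def centralZ (w b : ι → R) (r : ℕ) : R :=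
  ∑ s ∈ Icc 1 r, (-1) ^ (s - 1) *
    ∑ K ∈ powersetCard s univ,
      (∏ k ∈ K, w k) * coeff (r + 1 - s) (∏ k ∈ K, geomSeries (b k))

lemma coeff_succ_zSeries (w b : ι → R) (r : ℕ) :
    coeff (r + 1) (zSeries w b) + centralZ w b r =
      (-1) ^ (r + 1) * ∑ K ∈ powersetCard (r + 1) univ, ∏ k ∈ K, w k := by
  have hsub : insert (r + 1) (Icc 1 r) ⊆ range (Fintype.card ι + r + 2) := by
    intro s hs; simp only [mem_insert, mem_Icc, mem_range] at hs ⊢; omega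
  rw [zSeries_eq_sum w b (N := Fintype.card ι + r + 2) (by omega)]
  simp only [map_sum, coeff_C_mul, coeff_X_pow_mul']
  -- the `s`-th block matters only for `1 ≤ s ≤ r + 1`; for `s = r + 1` it no longer involves `b`

  rw [← sum_subset hsub fun s _ hs => ?_, sum_insert (by simp), centralZ, add_assoc,
    ← sum_add_distrib, sum_eq_zero (s := Icc 1 r) fun s hs => ?_, add_zero]
  · simp [mul_sum, coeff_zero_eq_constantCoeff, map_prod, constantCoeff_geomSeries]
  · obtain ⟨hs1, hsr⟩ := mem_Icc.mp hs
    obtain ⟨t, rfl⟩ := Nat.exists_eq_add_of_le' hs1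
    simp only [if_pos (show t + 1 ≤ r + 1 by omega), Nat.add_sub_cancel, mul_sum,
      ← sum_add_distrib]
    refine sum_eq_zero fun K _ => ?_
    ring
  · simp only [mem_insert, mem_Icc, not_or, not_and_or, not_le] at hs
    rcases Nat.eq_zero_or_pos s with rfl | hs0
    · simp
    · simp [if_neg (show ¬ s ≤ r + 1 by omega)]

lemma zSeries_eq_zSeries_iff (w b b' : ι → R) :
    zSeries w b = zSeries w b' ↔ ∀ r, 1 ≤ r → centralZ w b r = centralZ w b' r := by
  constructor
  · intro h r _
    linear_combination coeff_succ_zSeries w b r - coeff_succ_zSeries w b' r -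
      congrArg (coeff (r + 1)) h
  · intro h
    ext m
    rcases m with _ | r
    · simp [zSeries, map_prod, constantCoeff_geomSeries]
    · have hZ : centralZ w b r = centralZ w b' r := by
        rcases Nat.eq_zero_or_pos r with rfl | hr
        · simp [centralZ]
        · exact h r hr
      linear_combination coeff_succ_zSeries w b r - coeff_succ_zSeries w b' r - hZ

end PowerSeries

section OneSubProd
variable {R : Type*} [CommRing R] {ι : Type*} [Fintype ι]

noncomputable def oneSubProd (f : ι → R) : Polynomial R :=
  ∏ i, (1 - Polynomial.C (f i) * Polynomial.X)

lemma coe_oneSubProd (f : ι → R) :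
    (oneSubProd f : PowerSeries R) = ∏ i, (1 - PowerSeries.C (f i) * PowerSeries.X) := by
  rw [oneSubProd, ← Polynomial.coeToPowerSeries.ringHom_apply, map_prod]
  simp [Polynomial.coeToPowerSeries.ringHom_apply]

lemma isUnit_coe_oneSubProd (f : ι → R) : IsUnit (oneSubProd f : PowerSeries R) := by
  simp [PowerSeries.isUnit_iff_constantCoeff, coe_oneSubProd]

lemma coe_oneSubProd_eq_mul_zSeries {a w b : ι → R} (ha : ∀ i, a i = b i + w i) :
    (oneSubProd a : PowerSeries R) = oneSubProd b * zSeries w b := by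
  rw [coe_oneSubProd, coe_oneSubProd, zSeries, ← prod_mul_distrib]
  refine prod_congr rfl fun i _ => ?_
  rw [ha, map_add]
  linear_combination (PowerSeries.C (w i) * PowerSeries.X) * one_sub_C_mul_X_mul_geomSeries (b i)

lemma zSeries_eq_zSeries_iff_oneSubProd {w a b a' b' : ι → R} (ha : ∀ i, a i = b i + w i)
    (ha' : ∀ i, a' i = b' i + w i) :
    zSeries w b = zSeries w b' ↔ oneSubProd a * oneSubProd b' = oneSubProd a' * oneSubProd b := by
  rw [← Polynomial.coe_inj, Polynomial.coe_mul, Polynomial.coe_mul,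
    coe_oneSubProd_eq_mul_zSeries ha, coe_oneSubProd_eq_mul_zSeries ha']
  obtain ⟨u, hu⟩ := isUnit_coe_oneSubProd b
  obtain ⟨u', hu'⟩ := isUnit_coe_oneSubProd b'
  rw [← hu, ← hu']
  constructor
  · intro h; rw [h]; ring
  · intro h
    apply (u * u').isUnit.mul_left_cancel
    push_cast
    linear_combination h

lemma oneSubProd_eq_prod_map (f : ι → R) :
    oneSubProd f = ((univ.val.map f).map fun c => 1 - Polynomial.C c * Polynomial.X).prod := by
  rw [oneSubProd, Finset.prod_eq_multiset_prod, Multiset.map_map]; rfl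

lemma oneSubProd_mul_eq_iff [IsDomain R] [DecidableEq R] (f g f' g' : ι → R) :
    oneSubProd f * oneSubProd g' = oneSubProd f' * oneSubProd g ↔
      ∀ r, #{i | f i = r} + #{i | g' i = r} = #{i | f' i = r} + #{i | g i = r} := by
  simp only [oneSubProd_eq_prod_map, ← Multiset.prod_add, ← Multiset.map_add]
  have hcard : Multiset.card (univ.val.map f + univ.val.map g') =
      Multiset.card (univ.val.map f' + univ.val.map g) := by simp
  refine (Iff.intro (eq_of_prod_map_one_sub_C_mul_X_eq hcard) fun h => by rw [h]).trans ?_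
  simp only [Multiset.ext, Multiset.count_add, count_map_univ_val]

end OneSubProd

lemma res_add_eps (pb : Fin (n + 1) → ZMod 2) (l : Fin (n + 1) → ℤ) (i : Fin (n + 1)) :
    res pb (l + eps i) i = res pb l i + sg pb i := by
  simp [res, eps]
  ring

lemma Zint_cast {R : Type*} [CommRing R] (pb : Fin (n + 1) → ZMod 2) (r : ℕ)
    (l : Fin (n + 1) → ℤ) :
    (Zint pb r l : R) = centralZ (fun k => (sg pb k : R)) (fun k => (res pb l k : R)) r := by
  rw [Zint, centralZ]
  push_cast
  refine sum_congr rfl fun s hs => ?_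
  have hsr : r - s + 1 = r + 1 - s := by have := (mem_Icc.mp hs).2; omega
  simp only [coeff_prod_geomSeries _ _ (show r + 1 - s < r + 2 by omega), hsr, mul_sum, mul_ite,
    mul_zero]

/-- (i) `l(λ) = l(μ)` and `Z_s(λ) ≡ Z_s(μ) (mod p)` for all `s ≥ 1` iff
(ii) `l(λ) = l(μ)` and `A_r(λ) − B_r(λ) = A_r(μ) − B_r(μ)` for all `r ∈ ℤ/pℤ`. -/
theorem statement1 (p : ℕ) (hp : p = 0 ∨ p.Prime) (pb : Fin (n + 1) → ZMod 2)
    (lam mu : Fin (n + 1) → ℤ) :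
    (ell lam = ell mu ∧ ∀ s : ℕ, 1 ≤ s → ((Zint pb s lam : ZMod p) = (Zint pb s mu : ZMod p))) ↔
      (ell lam = ell mu ∧ ∀ r : ZMod p,
        (Acount pb p r lam : ℤ) - (Bcount pb p r lam : ℤ) =
          (Acount pb p r mu : ℤ) - (Bcount pb p r mu : ℤ)) := by
  have : IsDomain (ZMod p) := by
    rcases hp with rfl | hp
    · infer_instance
    · have := Fact.mk hp; infer_instance
  have hres : ∀ (l : Fin (n + 1) → ℤ) (i : Fin (n + 1)),
      (res pb (l + eps i) i : ZMod p) = (res pb l i : ZMod p) + (sg pb i : ZMod p) := by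
    intro l i; rw [res_add_eps, Int.cast_add]
  refine and_congr_right fun _ => ?_
  simp only [Zint_cast]
  rw [← zSeries_eq_zSeries_iff, zSeries_eq_zSeries_iff_oneSubProd (hres lam) (hres mu),
    oneSubProd_mul_eq_iff]
  refine forall_congr' fun r => ?_
  simp only [Acount, Bcount]
  omega

end Kujawa
end

section
/- Let p = 0. For all λ, μ ∈ ℤ^N one has wt(λ) = wt(μ) in P if and only if l(λ) = l(μ) and A_r(λ) − B_r(λ) = A_r(μ) − B_r(μ) for all r ∈ ℤ. -/
/-
Write `wt(λ) = Σ_r w_λ(r) γ_r`. Each index `i` contributes `±1` to `w_λ` at the single point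
`a_i = (−1)^{p̄_i} (λ + ρ)_i`, and `r_i(λ + ε_i)`, `r_i(λ)` are `a_i` and `a_i − 1` (even `i`)
or `a_i − 1` and `a_i` (odd `i`); so `A_r(λ) − B_r(λ) = w_λ(r) − w_λ(r + 1)`. Equal counts
therefore make the finitely supported `w_λ − w_μ` periodic, hence zero. Conversely the linear
map `γ_a ↦ a` sends `wt(λ)` to `l(λ) + Σ_i ρ_i`.
-/

namespace Kujawa

open Finset

variable {n : ℕ}

theorem _root_.Finsupp.eq_zero_of_periodic {M : Type*} [Zero M] (d : ℤ →₀ M)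
    (hd : Function.Periodic d 1) : d = 0 := by
  ext a
  obtain ⟨b, hb⟩ := Infinite.exists_notMem_finset d.support
  have hab : d a = d b := by simpa using (hd.int_mul (b - a) a).symm
  rw [hab, Finsupp.notMem_support_iff.mp hb, Finsupp.coe_zero, Pi.zero_apply]

theorem sg_mul_self (pb : Fin (n + 1) → ZMod 2) (i : Fin (n + 1)) : sg pb i * sg pb i = 1 := by
  unfold sg; split_ifs <;> norm_num

theorem wt0_apply (pb : Fin (n + 1) → ZMod 2) (l : Fin (n + 1) → ℤ) (r : ℤ) :
    wt0 pb l r = ∑ i, sg pb i * if sg pb i * (l i + rho pb i) = r then 1 else 0 := by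
  simp only [wt0, gamma0, Finsupp.finsetSum_apply, Finsupp.smul_apply,
    Finsupp.single_apply, smul_eq_mul]

theorem linearCombination_id_wt0 (pb : Fin (n + 1) → ZMod 2) (l : Fin (n + 1) → ℤ) :
    Finsupp.linearCombination ℤ id (wt0 pb l) = ell l + ∑ i, rho pb i := by
  simp only [wt0, gamma0, map_sum, map_zsmul, Finsupp.linearCombination_single, id,
    smul_eq_mul, ← mul_assoc, sg_mul_self, one_mul, ell, sum_add_distrib]

theorem ite_res_add_eps_sub_ite_res (pb : Fin (n + 1) → ZMod 2) (l : Fin (n + 1) → ℤ) (r : ℤ)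
    (i : Fin (n + 1)) :
    ((if res pb (l + eps i) i = r then 1 else 0) - if res pb l i = r then 1 else 0 : ℤ) =
      sg pb i * ((if sg pb i * (l i + rho pb i) = r then 1 else 0) -
        if sg pb i * (l i + rho pb i) = r + 1 then 1 else 0) := by
  have hl : (l + eps i) i = l i + 1 := by simp [eps]
  simp only [res, rho, sg, hl]
  split_ifs <;> omega

theorem Acount_sub_Bcount (pb : Fin (n + 1) → ZMod 2) (l : Fin (n + 1) → ℤ) (r : ℤ) :
    (Acount pb 0 (r : ZMod 0) l : ℤ) - Bcount pb 0 (r : ZMod 0) l =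
      wt0 pb l r - wt0 pb l (r + 1) := by
  simp only [Acount, Bcount, card_filter, wt0_apply, Nat.cast_sum, Nat.cast_ite, Nat.cast_one,
    Nat.cast_zero, ← sum_sub_distrib]
  -- the casts `ℤ → ZMod 0` left by `Acount`, `Bcount` are the identity definitionally
  exact sum_congr rfl fun i _ => (ite_res_add_eps_sub_ite_res pb l r i).trans (mul_sub _ _ _)

/-- for `p = 0`, `wt(λ) = wt(μ)` iff `l(λ) = l(μ)` and
`A_r(λ) − B_r(λ) = A_r(μ) − B_r(μ)` for all `r ∈ ℤ` (note `ZMod 0 = ℤ`). -/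
theorem statement2 (pb : Fin (n + 1) → ZMod 2) (lam mu : Fin (n + 1) → ℤ) :
    wt0 pb lam = wt0 pb mu ↔
      (ell lam = ell mu ∧ ∀ r : ZMod 0,
        (Acount pb 0 r lam : ℤ) - (Bcount pb 0 r lam : ℤ) =
          (Acount pb 0 r mu : ℤ) - (Bcount pb 0 r mu : ℤ)) := by
  constructor
  · intro h
    refine ⟨?_, fun r => ?_⟩
    · have hlam := linearCombination_id_wt0 pb lam
      rw [h, linearCombination_id_wt0] at hlam
      linarith
    · rw [Acount_sub_Bcount pb lam r, Acount_sub_Bcount pb mu r, h]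
  · rintro ⟨-, hcounts⟩
    have hper : Function.Periodic (wt0 pb lam - wt0 pb mu) 1 := fun r => by
      have := hcounts r
      rw [Acount_sub_Bcount pb lam r, Acount_sub_Bcount pb mu r] at this
      simp only [Finsupp.coe_sub, Pi.sub_apply]
      linarith
    exact sub_eq_zero.mp (Finsupp.eq_zero_of_periodic _ hper)

end Kujawa
end

section
/- For every λ ∈ ℤ^N, every 1 ≤ i ≤ N, and every r ∈ ℤ/pℤ: i is r-good for λ if and only if i is r-normal for λ and i is r-conormal for λ − ε_i. -/
namespace Kujawa

open Finset

variable {n : ℕ}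

/-!
Read the `r`-signature as a word in `1, 0, -1` and let `height` be its partial sums. A `−` at `i`
survives cancellation iff the height just before `i` exceeds every later height, and a `+` at `i`
survives iff the height just after `i` exceeds every earlier one. Passing from `λ` to `λ − ε_i`
turns the `−` at `i` into a `+` and raises every later height by `2`, so `i` is conormal for
`λ − ε_i` iff no earlier height exceeds the height `h` just before `i`. An earlier normal position
has a height above `h`; conversely, starting from a height above `h` and repeatedly moving to a later
height at least as large, one stops, before reaching `i`, at an earlier normal position.
-/

section Dominance

variable {ι α : Type*} [LinearOrder ι] [LinearOrder α]

def DominatesAfter (S : ι → α) (i : ι) : Prop := ∀ m, i < m → S m < S i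

variable {S : ι → α} {i : ι}

theorem DominatesAfter.exists_dominatesAfter_of_lt [WellFoundedGT ι] (hi : DominatesAfter S i)
    (j : ι) (hij : S i < S j) : ∃ k, j ≤ k ∧ k < i ∧ DominatesAfter S k := by
  induction j using WellFoundedGT.induction with
  | _ j ih =>
    have hji : j < i := by
      by_contra! h
      rcases h.lt_or_eq with h | rfl
      · exact (hi j h).not_gt hij
      · exact lt_irrefl _ hij
    by_cases hj : DominatesAfter S j
    · exact ⟨j, le_rfl, hji, hj⟩
    · obtain ⟨m, hjm, hSm⟩ : ∃ m, j < m ∧ S j ≤ S m := by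
        simpa [DominatesAfter] using hj
      obtain ⟨k, hmk, hki, hk⟩ := ih m hjm (hij.trans_le hSm)
      exact ⟨k, hjm.le.trans hmk, hki, hk⟩

theorem DominatesAfter.forall_lt_not_iff [WellFoundedGT ι] (hi : DominatesAfter S i) :
    (∀ j < i, ¬ DominatesAfter S j) ↔ ∀ j ≤ i, S j ≤ S i := by
  refine ⟨fun h j _ => ?_, fun h j hji hj => (hj i hji).not_ge (h j hji.le)⟩
  by_contra! hlt
  obtain ⟨k, -, hki, hk⟩ := hi.exists_dominatesAfter_of_lt j hlt
  exact h k hki hk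

end Dominance

section Height

variable {M : Type*} [AddCommGroup M]

/-- Heights live on the `n + 2` gaps of the word: `height w t` sums the letters before gap `t`. -/
def height (w : Fin (n + 1) → M) (t : Fin (n + 2)) : M := ∑ k with k.castSucc < t, w k

theorem sum_Icc_eq_height_sub (w : Fin (n + 1) → M) {i j : Fin (n + 1)} (hij : i ≤ j) :
    ∑ k ∈ Icc i j, w k = height w j.succ - height w i.castSucc := by
  have hsub : univ.filter (fun k : Fin (n + 1) => k.castSucc < i.castSucc) ⊆
      univ.filter (fun k : Fin (n + 1) => k.castSucc < j.succ) := by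
    intro k
    simpa using fun hk => (hk.trans_le hij).le
  rw [height, height, ← sum_sdiff hsub, add_sub_cancel_right]
  refine sum_congr ?_ fun _ _ => rfl
  ext k
  simp [and_comm]

theorem height_succ (w : Fin (n + 1) → M) (i : Fin (n + 1)) :
    height w i.succ = height w i.castSucc + w i :=
  eq_add_of_sub_eq' (by simpa using (sum_Icc_eq_height_sub w le_rfl).symm)

theorem height_congr {w w' : Fin (n + 1) → M} {t : Fin (n + 2)}
    (h : ∀ k : Fin (n + 1), k.castSucc < t → w' k = w k) : height w' t = height w t :=
  sum_congr rfl fun k hk => h k (by simpa using hk)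

end Height

theorem sum_eq_card_filter_one_sub_card_filter_neg_one {ι : Type*} (s : Finset ι) (f : ι → ℤ)
    (hf : ∀ k ∈ s, f k = -1 ∨ f k = 0 ∨ f k = 1) :
    ∑ k ∈ s, f k = (#(s.filter (f · = 1)) : ℤ) - #(s.filter (f · = -1)) := by
  rw [natCast_card_filter, natCast_card_filter, ← sum_sub_distrib]
  refine sum_congr rfl fun k hk => ?_
  rcases hf k hk with h | h | h <;> simp [h]

section Signature

variable (pb : Fin (n + 1) → ZMod 2) (p : ℕ) (r : ZMod p)

theorem sig_eq_neg_one_or_zero_or_one (l : Fin (n + 1) → ℤ) (k : Fin (n + 1)) :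
    sig pb p r l k = -1 ∨ sig pb p r l k = 0 ∨ sig pb p r l k = 1 := by
  unfold sig
  split_ifs <;> simp

theorem nP_sub_nM (l : Fin (n + 1) → ℤ) {i j : Fin (n + 1)} (hij : i ≤ j) :
    (nP pb p r l i j : ℤ) - nM pb p r l i j =
      height (sig pb p r l) j.succ - height (sig pb p r l) i.castSucc := by
  rw [nP, nM, ← coe_filter, ← coe_filter, Set.ncard_coe_finset, Set.ncard_coe_finset,
    ← sum_eq_card_filter_one_sub_card_filter_neg_one _ _
      fun k _ => sig_eq_neg_one_or_zero_or_one pb p r l k, sum_Icc_eq_height_sub _ hij]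

theorem rMinus_iff_dominatesAfter (l : Fin (n + 1) → ℤ) (i : Fin (n + 1)) :
    RMinus pb p r l i ↔ DominatesAfter (height (sig pb p r l)) i.castSucc := by
  have hcount : ∀ j, i ≤ j → (nP pb p r l i j < nM pb p r l i j ↔
      height (sig pb p r l) j.succ < height (sig pb p r l) i.castSucc) := fun j hij => by
    have := nP_sub_nM pb p r l hij
    omega
  have hdom : DominatesAfter (height (sig pb p r l)) i.castSucc ↔
      ∀ j, i ≤ j → height (sig pb p r l) j.succ < height (sig pb p r l) i.castSucc := by
    rw [DominatesAfter, Fin.forall_fin_succ]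
    simp
  rw [hdom, RMinus]
  refine ⟨fun ⟨_, h⟩ j hij => (hcount j hij).1 (h j hij),
    fun h => ⟨?_, fun j hij => (hcount j hij).2 (h j hij)⟩⟩
  have hneg := h i le_rfl
  rw [height_succ] at hneg
  have := sig_eq_neg_one_or_zero_or_one pb p r l i
  omega

theorem rPlus_iff (l : Fin (n + 1) → ℤ) (i : Fin (n + 1)) :
    RPlus pb p r l i ↔
      ∀ j ≤ i, height (sig pb p r l) j.castSucc < height (sig pb p r l) i.succ := by
  have hcount : ∀ j ≤ i, (nM pb p r l j i < nP pb p r l j i ↔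
      height (sig pb p r l) j.castSucc < height (sig pb p r l) i.succ) := fun j hji => by
    have := nP_sub_nM pb p r l hji
    omega
  refine ⟨fun ⟨_, h⟩ j hji => (hcount j hji).1 (h j hji),
    fun h => ⟨?_, fun j hji => (hcount j hji).2 (h j hji)⟩⟩
  have hpos := h i le_rfl
  rw [height_succ] at hpos
  have := sig_eq_neg_one_or_zero_or_one pb p r l i
  omega

variable {pb p r} {lam : Fin (n + 1) → ℤ} {i : Fin (n + 1)}

theorem sig_sub_eps_of_ne {k : Fin (n + 1)} (hk : k ≠ i) :
    sig pb p r (lam - eps i) k = sig pb p r lam k := by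
  simp [sig, res, eps, hk]

theorem sig_sub_eps_self (hi : sig pb p r lam i = -1) : sig pb p r (lam - eps i) i = 1 := by
  have hres : ((res pb lam i : ℤ) : ZMod p) = r := by
    unfold sig at hi
    split_ifs at hi
    assumption
  simp [sig, hres]

theorem height_sig_sub_eps_castSucc {j : Fin (n + 1)} (hji : j ≤ i) :
    height (sig pb p r (lam - eps i)) j.castSucc = height (sig pb p r lam) j.castSucc :=
  height_congr fun _ hk => sig_sub_eps_of_ne ((Fin.castSucc_lt_castSucc_iff.1 hk).trans_le hji).ne

theorem height_sig_sub_eps_succ (hi : sig pb p r lam i = -1) :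
    height (sig pb p r (lam - eps i)) i.succ = height (sig pb p r lam) i.castSucc + 1 := by
  rw [height_succ, height_sig_sub_eps_castSucc le_rfl, sig_sub_eps_self hi]

end Signature

theorem statement9_general (p : ℕ) (pb : Fin (n + 1) → ZMod 2)
    (lam : Fin (n + 1) → ℤ) (i : Fin (n + 1)) (r : ZMod p) :
    RGood pb p r lam i ↔ RMinus pb p r lam i ∧ RPlus pb p r (lam - eps i) i := by
  refine and_congr_right fun hi => ?_
  have hsig : sig pb p r lam i = -1 := hi.1
  set H := height (sig pb p r lam)
  rw [rMinus_iff_dominatesAfter] at hi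
  calc (∀ j < i, ¬ RMinus pb p r lam j)
      ↔ ∀ t < i.castSucc, ¬ DominatesAfter H t := by
        rw [Fin.forall_fin_succ' (P := fun t => t < i.castSucc → ¬ DominatesAfter H t)]
        simp [rMinus_iff_dominatesAfter, H, (Fin.castSucc_lt_last i).not_gt]
    _ ↔ ∀ t ≤ i.castSucc, H t ≤ H i.castSucc := hi.forall_lt_not_iff
    _ ↔ ∀ j ≤ i, H j.castSucc ≤ H i.castSucc := by
        rw [Fin.forall_fin_succ' (P := fun t => t ≤ i.castSucc → H t ≤ H i.castSucc)]
        simp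
    _ ↔ RPlus pb p r (lam - eps i) i := by
        rw [rPlus_iff, height_sig_sub_eps_succ hsig]
        refine forall₂_congr fun j hji => ?_
        rw [height_sig_sub_eps_castSucc hji, Int.lt_add_one_iff]

/-- `i` is `r`-good for `λ` iff `i` is `r`-normal for `λ` and `i` is
`r`-conormal for `λ − ε_i`. -/
theorem statement9 (p : ℕ) (hp : p = 0 ∨ p.Prime) (pb : Fin (n + 1) → ZMod 2)
    (lam : Fin (n + 1) → ℤ) (i : Fin (n + 1)) (r : ZMod p) :
    RGood pb p r lam i ↔ RMinus pb p r lam i ∧ RPlus pb p r (lam - eps i) i :=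
  statement9_general p pb lam i r

end Kujawa
end

section
/- For every λ ∈ ℤ^N, every r ∈ ℤ/pℤ, and every 1 ≤ i ≤ N: i is the position of a + in the reduced r-signature σ̃_r(λ) if and only if there exists a ≥ 0 such that (f̃*_r)^a(λ) ≠ 0 and (f̃*_r)^{a+1}(λ) = (f̃*_r)^a(λ) + ε_i, where f̃*_r is extended by f̃*_r(0) = 0 and (f̃*_r)^0(λ) = λ. -/
namespace Kujawa

open Finset

variable {n : ℕ}

/-
A step of `f̃*_r` adds `ε_j` at the rightmost uncancelled `+` of the signature. This changes the
signature only at `j`, where the `+` becomes a `−` (because `±1 ≢ 0 mod p`). Hence every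
uncancelled `+` to the left of `j` stays uncancelled, no new one appears, and the one at `j`
disappears: the operator walks through the uncancelled `+`'s from right to left, adding `ε_i` at
each of them in turn, and then returns `0`.
-/

lemma eps_injective : Function.Injective (eps : Fin (n + 1) → Fin (n + 1) → ℤ) := by
  intro i j h
  simpa [eps, eq_comm] using congrFun h j

section Signature

variable {pb : Fin (n + 1) → ZMod 2} {p : ℕ} {r : ZMod p} {l m : Fin (n + 1) → ℤ}
  {i j k : Fin (n + 1)}

lemma sig_congr (h : l k = m k) : sig pb p r l k = sig pb p r m k := by
  simp [sig, res, h]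

lemma sig_add_eps_of_ne (hk : k ≠ j) : sig pb p r (l + eps j) k = sig pb p r l k :=
  sig_congr (by simp [eps, hk])

lemma intCast_sg_ne_zero (hp : p ≠ 1) : ((sg pb j : ℤ) : ZMod p) ≠ 0 := by
  have := ZMod.nontrivial_iff.mpr hp
  unfold sg
  split_ifs <;> simp

lemma sig_add_eps_self (hp : p ≠ 1) (hj : sig pb p r l j = 1) :
    sig pb p r (l + eps j) j = -1 := by
  have hres : ((res pb (l + eps j) j : ℤ) : ZMod p) = r := by
    by_contra h
    simp only [sig, if_neg h] at hj
    split_ifs at hj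
    norm_num at hj
  have hstep : res pb (l + eps j + eps j) j = res pb (l + eps j) j + sg pb j := by
    simp only [res, eps, Pi.add_apply, if_pos]
    ring
  have hnext : ((res pb (l + eps j + eps j) j : ℤ) : ZMod p) ≠ r := by
    rw [hstep, Int.cast_add, hres]
    simpa using intCast_sg_ne_zero hp
  rw [sig, if_neg hnext, if_pos hres]

lemma nM_le_nM {a b : Fin (n + 1)}
    (h : ∀ k ∈ Icc a b, sig pb p r l k = -1 → sig pb p r m k = -1) :
    nM pb p r l a b ≤ nM pb p r m a b :=
  Set.ncard_le_ncard (fun k hk => ⟨hk.1, h k hk.1 hk.2⟩) (Set.toFinite _)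

lemma nP_le_nP {a b : Fin (n + 1)}
    (h : ∀ k ∈ Icc a b, sig pb p r l k = 1 → sig pb p r m k = 1) :
    nP pb p r l a b ≤ nP pb p r m a b :=
  Set.ncard_le_ncard (fun k hk => ⟨hk.1, h k hk.1 hk.2⟩) (Set.toFinite _)

lemma RPlus.add_eps_of_lt (hi : RPlus pb p r l i) (hij : i < j) :
    RPlus pb p r (l + eps j) i := by
  have hsig : ∀ k ≤ i, sig pb p r (l + eps j) k = sig pb p r l k := fun k hk =>
    sig_add_eps_of_ne (hk.trans_lt hij).ne
  refine ⟨(hsig i le_rfl).trans hi.1, fun a ha => ?_⟩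
  have hM := nM_le_nM (l := l + eps j) (m := l) (a := a) (b := i) fun k hk h =>
    (hsig k (mem_Icc.mp hk).2) ▸ h
  have hP := nP_le_nP (l := l) (m := l + eps j) (a := a) (b := i) fun k hk h =>
    (hsig k (mem_Icc.mp hk).2).symm ▸ h
  exact (hM.trans_lt (hi.2 a ha)).trans_le hP

lemma RPlus.of_add_eps (hp : p ≠ 1) (hj : sig pb p r l j = 1)
    (hi : RPlus pb p r (l + eps j) i) : RPlus pb p r l i := by
  have hj' := sig_add_eps_self hp hj
  have hne : ∀ {k}, sig pb p r l k = -1 → k ≠ j := by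
    rintro k hk rfl
    rw [hj] at hk
    norm_num at hk
  have hne' : ∀ {k}, sig pb p r (l + eps j) k = 1 → k ≠ j := by
    rintro k hk rfl
    rw [hj'] at hk
    norm_num at hk
  refine ⟨(sig_add_eps_of_ne (hne' hi.1)).symm.trans hi.1, fun a ha => ?_⟩
  have hM := nM_le_nM (l := l) (m := l + eps j) (a := a) (b := i) fun k _ h =>
    (sig_add_eps_of_ne (hne h)).trans h
  have hP := nP_le_nP (l := l + eps j) (m := l) (a := a) (b := i) fun k _ h =>
    (sig_add_eps_of_ne (hne' h)).symm.trans h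
  exact (hM.trans_lt (hi.2 a ha)).trans_le hP

lemma setOf_rplus_add_eps_ssubset (hp : p ≠ 1) (hj : RPlus pb p r l j) :
    {k | RPlus pb p r (l + eps j) k} ⊂ {k | RPlus pb p r l k} := by
  refine (Set.ssubset_iff_of_subset fun k hk => RPlus.of_add_eps hp hj.1 hk).mpr ⟨j, hj, ?_⟩
  intro hj'
  have := hj'.1
  rw [sig_add_eps_self hp hj.1] at this
  norm_num at this

end Signature

section Operator

variable {pb : Fin (n + 1) → ZMod 2} {p : ℕ} {r : ZMod p} {l m : Fin (n + 1) → ℤ}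
  {i : Fin (n + 1)}

lemma exists_rplus_of_fStar_eq_some (h : fStar pb p r l = some m) :
    ∃ j, RPlus pb p r l j ∧ m = l + eps j := by
  classical
  unfold fStar at h
  split_ifs at h with hne
  exact ⟨_, (mem_filter.mp (max'_mem _ hne)).2, (Option.some_injective _ h).symm⟩

lemma RPlus.exists_fStar_eq_some (hi : RPlus pb p r l i) :
    ∃ j, i ≤ j ∧ RPlus pb p r l j ∧ fStar pb p r l = some (l + eps j) := by
  classical
  unfold fStar
  split_ifs with hne
  · exact ⟨_, le_max' _ i (by simpa using hi), (mem_filter.mp (max'_mem _ hne)).2, rfl⟩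
  · exact absurd ⟨i, by simpa using hi⟩ hne

lemma RPlus.of_iterate_fStar (hp : p ≠ 1) {a : ℕ}
    (h : (fun o => Option.bind o (fStar pb p r))^[a] (some l) = some m)
    (hi : RPlus pb p r m i) : RPlus pb p r l i := by
  induction a generalizing l with
  | zero =>
    cases h
    exact hi
  | succ a ih =>
    rw [Function.iterate_succ_apply] at h
    cases hf : fStar pb p r l with
    | none =>
      rw [Option.bind_some, hf, Function.iterate_fixed rfl] at h
      cases h
    | some l' =>
      obtain ⟨j, hj, rfl⟩ := exists_rplus_of_fStar_eq_some hf
      rw [Option.bind_some, hf] at h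
      exact (ih h).of_add_eps hp hj.1

lemma RPlus.exists_iterate_fStar (hp : p ≠ 1) (hi : RPlus pb p r l i) :
    ∃ (a : ℕ) (mu : Fin (n + 1) → ℤ),
      (fun o => Option.bind o (fStar pb p r))^[a] (some l) = some mu ∧
        (fun o => Option.bind o (fStar pb p r))^[a + 1] (some l) = some (mu + eps i) := by
  induction hN : {k | RPlus pb p r l k}.ncard using Nat.strong_induction_on generalizing l with
  | _ N ih =>
  obtain ⟨j, hij, hj, hf⟩ := hi.exists_fStar_eq_some
  rcases hij.eq_or_lt with rfl | hlt
  · exact ⟨0, l, rfl, by simpa using hf⟩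
  · obtain ⟨a, mu, h₁, h₂⟩ := ih _ (hN ▸ Set.ncard_lt_ncard (setOf_rplus_add_eps_ssubset hp hj))
      (hi.add_eps_of_lt hlt) rfl
    refine ⟨a + 1, mu, ?_, ?_⟩ <;>
      rwa [Function.iterate_succ_apply, Option.bind_some, hf]

end Operator

/-- `i` is the position of a `+` in the reduced `r`-signature of `λ` iff
`(f̃*_r)^{a+1}(λ) = (f̃*_r)^a(λ) + ε_i` for some `a ≥ 0` with `(f̃*_r)^a(λ) ≠ 0`. -/
theorem statement15 (p : ℕ) (hp : p = 0 ∨ p.Prime) (pb : Fin (n + 1) → ZMod 2)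
    (lam : Fin (n + 1) → ℤ) (r : ZMod p) (i : Fin (n + 1)) :
    RPlus pb p r lam i ↔
      ∃ (a : ℕ) (mu : Fin (n + 1) → ℤ),
        (fun o => Option.bind o (fStar pb p r))^[a] (some lam) = some mu ∧
          (fun o => Option.bind o (fStar pb p r))^[a + 1] (some lam) = some (mu + eps i) := by
  have hp₁ : p ≠ 1 := by
    rintro rfl
    simp [Nat.not_prime_one] at hp
  refine ⟨RPlus.exists_iterate_fStar hp₁, ?_⟩
  rintro ⟨a, mu, h, hsucc⟩
  rw [Function.iterate_succ_apply', h, Option.bind_some] at hsucc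
  obtain ⟨j, hj, hmu⟩ := exists_rplus_of_fStar_eq_some hsucc
  obtain rfl := eps_injective (add_left_cancel hmu)
  exact hj.of_iterate_fStar hp₁ h

end Kujawa
end
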